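/- arXiv:2112.10868 — 3 statements merged into one kernel-verified Lean document; each statement's English description precedes it below -/
import Mathlib

section
/- For every r = 0,…,d−1, the vector |r⟩_T := (2𝕚/d) sin(π/m) ω^{−d/(2m)} Σ_{q=0}^{d−1} (−1)^{δ_{q,0}} (ω^{−q/2}/(1 − ω^{r−q−1/m})) |q⟩ ∈ ℂ^d satisfies T_{d,m} |r⟩_T = ω^{r} |r⟩_T (note that since m ≥ 2, the denominators 1 − ω^{r−q−1/m} are nonzero). -/
open Matrix

/-- `omg d t` is ω^t = exp(2πi·t/d), where ω = exp(2πi/d). -/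
noncomputable def omg (d : ℕ) (t : ℝ) : ℂ :=
  Complex.exp ((2 * Real.pi * t / d : ℝ) * Complex.I)

/-- T_{d,m} = Σ_i ω^{i+1/m}|i⟩⟨i| − (2i/d) sin(π/m) Σ_{i,j} (−1)^{δ_{i0}+δ_{j0}}
ω^{(i+j)/2−(d−2)/(2m)} |i⟩⟨j|. -/
noncomputable def Tmat (d m : ℕ) : Matrix (Fin d) (Fin d) ℂ :=
  Matrix.of fun i j =>
    (if i = j then omg d ((i : ℝ) + 1 / m) else 0) -
      (2 * Complex.I / d) * (Real.sin (Real.pi / m) : ℂ) *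
        ((-1 : ℂ) ^ (((if (i : ℕ) = 0 then 1 else 0) + (if (j : ℕ) = 0 then 1 else 0)) : ℕ)) *
        omg d (((i : ℝ) + j) / 2 - ((d : ℝ) - 2) / (2 * m))

lemma omg_add (d : ℕ) (s t : ℝ) : omg d (s + t) = omg d s * omg d t := by
  rw [omg, omg, omg, ← Complex.exp_add]
  congr 1
  push_cast
  ring

lemma omg_zero (d : ℕ) : omg d 0 = 1 := by simp [omg]

lemma omg_ne_zero (d : ℕ) (t : ℝ) : omg d t ≠ 0 := Complex.exp_ne_zero _

lemma omg_pow (d : ℕ) (t : ℝ) (n : ℕ) : omg d t ^ n = omg d (n * t) := by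
  rw [omg, omg, ← Complex.exp_nat_mul]
  congr 1
  push_cast
  ring

lemma omg_int_mul {d : ℕ} (hd : d ≠ 0) (n : ℤ) : omg d ((n : ℝ) * d) = 1 := by
  rw [omg]
  have hd' : (d : ℂ) ≠ 0 := Nat.cast_ne_zero.2 hd
  have h : ((2 * Real.pi * ((n:ℝ) * d) / d : ℝ) : ℂ) * Complex.I
      = n * (2 * (Real.pi : ℂ) * Complex.I) := by
    push_cast
    field_simp
  rw [h]
  exact Complex.exp_int_mul_two_pi_mul_I n

lemma omg_ne_one {d : ℕ} (hd : d ≠ 0) {t : ℝ} (h : ∀ n : ℤ, t ≠ n * d) : omg d t ≠ 1 := by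
  intro hc
  rw [omg, Complex.exp_eq_one_iff] at hc
  obtain ⟨n, hn⟩ := hc
  have him := congrArg Complex.im hn
  simp [Complex.mul_im] at him
  have hd' : (d : ℝ) ≠ 0 := Nat.cast_ne_zero.2 hd
  have hπ : Real.pi ≠ 0 := Real.pi_ne_zero
  apply h n
  field_simp at him
  have h2 : 2*Real.pi*t = 2*Real.pi*((n:ℝ)*d) := by rw [him]; ring
  have hne : (2*Real.pi) ≠ 0 := by positivity
  exact mul_left_cancel₀ hne h2

lemma denom_ne_one {d m : ℕ} (hd : 2 ≤ d) (hm : 2 ≤ m) (a : ℤ) :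
    omg d ((a : ℝ) - 1 / m) ≠ 1 := by
  apply omg_ne_one (by omega)
  intro n hn
  have hm0 : (0:ℝ) < 1/m := by positivity
  have hm1 : (1:ℝ)/m < 1 := by
    rw [div_lt_one (by positivity)]
    exact_mod_cast hm
  have hint : ((a - n * d : ℤ) : ℝ) = 1 / m := by push_cast; linarith
  have h1 : (0:ℤ) < a - n*d := by
    have : (0:ℝ) < ((a - n*d : ℤ):ℝ) := by rw [hint]; exact hm0
    exact_mod_cast this
  have h2 : a - n*d < 1 := by
    have : ((a - n*d : ℤ):ℝ) < 1 := by rw [hint]; exact hm1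
    exact_mod_cast this
  omega

lemma E_ne_one {d m : ℕ} (hd : 2 ≤ d) (hm : 2 ≤ m) :
    omg d (-((d : ℝ) / m)) ≠ 1 := by
  apply omg_ne_one (by omega)
  intro n hn
  have hd' : (d:ℝ) ≠ 0 := by positivity
  have hm0 : (0:ℝ) < 1/m := by positivity
  have hm1 : (1:ℝ)/m < 1 := by
    rw [div_lt_one (by positivity)]
    exact_mod_cast hm
  have key : -((1:ℝ)/m) = n := by
    have h' : (-((1:ℝ)/m)) * d = (n:ℝ) * d := by rw [← hn]; ring
    exact mul_right_cancel₀ hd' h'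
  have hint : ((-n : ℤ) : ℝ) = 1 / m := by push_cast; linarith
  have h1 : (0:ℤ) < -n := by
    have : (0:ℝ) < ((-n : ℤ):ℝ) := by rw [hint]; exact hm0
    exact_mod_cast this
  have h2 : (-n:ℤ) < 1 := by
    have : ((-n : ℤ):ℝ) < 1 := by rw [hint]; exact hm1
    exact_mod_cast this
  omega

lemma roots_sum {d : ℕ} (hd : 2 ≤ d) {k : ℕ} (hk : k < d) :
    ∑ q : Fin d, (omg d (-(k : ℝ))) ^ (q : ℕ) = if k = 0 then (d : ℂ) else 0 := by
  rw [Fin.sum_univ_eq_sum_range (fun j => omg d (-(k:ℝ)) ^ j) d]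
  by_cases h : k = 0
  · subst h
    simp [omg_zero]
  · have hne : omg d (-(k:ℝ)) ≠ 1 := by
      apply omg_ne_one (by omega)
      intro n hn
      have hik : ((k:ℤ) + n * d : ℤ) = 0 := by
        have : (((k:ℤ) + n*d : ℤ):ℝ) = 0 := by push_cast; linarith
        exact_mod_cast this
      have hdvd : (d:ℤ) ∣ (k:ℤ) := ⟨-n, by linarith⟩
      have hdvd' : d ∣ k := Int.ofNat_dvd.mp (by exact_mod_cast hdvd)
      have := Nat.le_of_dvd (Nat.pos_of_ne_zero h) hdvd'
      omega
    rw [geom_sum_eq hne d]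
    have hpow : omg d (-(k:ℝ)) ^ d = 1 := by
      rw [omg_pow]
      have : (d:ℝ) * (-(k:ℝ)) = ((-(k:ℤ) : ℤ):ℝ) * d := by push_cast; ring
      rw [this, omg_int_mul (by omega)]
    rw [hpow]
    simp [h]

lemma denom_ne_zero {d m : ℕ} (hd : 2 ≤ d) (hm : 2 ≤ m) (r q : Fin d) :
    1 - omg d ((r : ℝ) - q - 1 / m) ≠ 0 := by
  have h := denom_ne_one hd hm ((r:ℤ) - (q:ℤ))
  have he : (((r:ℤ) - (q:ℤ) : ℤ) : ℝ) - 1/m = (r : ℝ) - q - 1/m := by push_cast; ring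
  rw [he] at h
  exact sub_ne_zero.2 (Ne.symm h)

lemma sumA {d m : ℕ} (hd : 2 ≤ d) (hm : 2 ≤ m) (r : Fin d) :
    ∑ q : Fin d, (1 - omg d ((r : ℝ) - q - 1 / m))⁻¹
      = d * (1 - omg d (-((d : ℝ) / m)))⁻¹ := by
  have hm' : (m:ℝ) ≠ 0 := by positivity
  have hE1 : 1 - omg d (-((d:ℝ)/m)) ≠ 0 := sub_ne_zero.2 (Ne.symm (E_ne_one hd hm))
  have hyd : ∀ q : Fin d, omg d ((r:ℝ) - q - 1/m) ^ d = omg d (-((d:ℝ)/m)) := by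
    intro q
    rw [omg_pow]
    have h1 : (d:ℝ) * ((r:ℝ) - q - 1/m) = (((r:ℤ) - (q:ℤ) : ℤ):ℝ) * d + (-((d:ℝ)/m)) := by
      push_cast; field_simp; ring
    rw [h1, omg_add, omg_int_mul (show d ≠ 0 by omega), one_mul]
  have step : ∀ q : Fin d, q ∈ Finset.univ → (1 - omg d ((r:ℝ) - q - 1/m))⁻¹
      = (∑ k ∈ Finset.range d, omg d ((r:ℝ) - q - 1/m) ^ k)
          * (1 - omg d (-((d:ℝ)/m)))⁻¹ := by
    intro q _
    have hg := geom_sum_mul (omg d ((r:ℝ) - q - 1/m)) d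
    have hD := denom_ne_zero hd hm r q
    have hSE : (1 - omg d ((r:ℝ) - q - 1/m))
        * (∑ k ∈ Finset.range d, omg d ((r:ℝ) - q - 1/m) ^ k)
        = 1 - omg d (-((d:ℝ)/m)) := by
      linear_combination -hg - hyd q
    rw [← div_eq_mul_inv, eq_div_iff hE1, ← hSE, ← mul_assoc,
      inv_mul_cancel₀ hD, one_mul]
  rw [Finset.sum_congr rfl step, ← Finset.sum_mul]
  congr 1
  rw [Finset.sum_comm]
  have hterm : ∀ k ∈ Finset.range d, (∑ q : Fin d, omg d ((r:ℝ)-q-1/m)^k)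
      = omg d (k*((r:ℝ)-1/m)) * (if k = 0 then (d:ℂ) else 0) := by
    intro k hk
    rw [← roots_sum hd (Finset.mem_range.mp hk), Finset.mul_sum]
    apply Finset.sum_congr rfl
    intro q _
    rw [omg_pow, omg_pow, ← omg_add]
    congr 1
    ring
  rw [Finset.sum_congr rfl hterm]
  have h0 : (0:ℕ) ∈ Finset.range d := Finset.mem_range.mpr (by omega)
  rw [Finset.sum_eq_single 0 (fun k _ hk => by simp [hk]) (fun h => absurd h0 h)]
  simp [omg_zero]

lemma keyB {d m : ℕ} (hd : 2 ≤ d) (hm : 2 ≤ m) :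
    2 * Complex.I / d * (Real.sin (Real.pi / m) : ℂ) * omg d (-((d:ℝ)/(2*m)))
      * ((d:ℂ) * (1 - omg d (-((d:ℝ)/m)))⁻¹) = 1 := by
  have hdR : (d:ℝ) ≠ 0 := by positivity
  have hmR : (m:ℝ) ≠ 0 := by positivity
  have hdC : (d:ℂ) ≠ 0 := Nat.cast_ne_zero.2 (by omega)
  have hE1 : 1 - omg d (-((d:ℝ)/m)) ≠ 0 := sub_ne_zero.2 (Ne.symm (E_ne_one hd hm))
  set θ : ℝ := Real.pi / m with hθ
  have hu : omg d (-((d:ℝ)/(2*m))) = Complex.exp (-(θ:ℂ) * Complex.I) := by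
    rw [omg]
    congr 1
    have h1 : (2 * Real.pi * (-((d:ℝ)/(2*m))) / d : ℝ) = -θ := by
      rw [hθ]; field_simp
    rw [h1]
    push_cast
    ring
  have hE : omg d (-((d:ℝ)/m))
      = Complex.exp (-(θ:ℂ) * Complex.I) * Complex.exp (-(θ:ℂ) * Complex.I) := by
    rw [← Complex.exp_add, omg]
    congr 1
    have h1 : (2 * Real.pi * (-((d:ℝ)/m)) / d : ℝ) = -θ + -θ := by
      rw [hθ]; field_simp; ring
    rw [h1]
    push_cast
    ring

  have hsin : (Real.sin θ : ℂ) * (2*Complex.I)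
      = Complex.exp ((θ:ℂ) * Complex.I) - Complex.exp (-(θ:ℂ) * Complex.I) := by
    rw [Complex.ofReal_sin, Complex.exp_mul_I, Complex.exp_mul_I, Complex.cos_neg,
      Complex.sin_neg]
    ring
  have hmul : Complex.exp ((θ:ℂ) * Complex.I) * Complex.exp (-(θ:ℂ) * Complex.I) = 1 := by
    rw [← Complex.exp_add]
    simp
  rw [hu, hE]
  set u := Complex.exp (-(θ:ℂ) * Complex.I)
  set w := Complex.exp ((θ:ℂ) * Complex.I)
  -- goal : 2*I/d * sinθ * u * (d * (1 - u*u)⁻¹) = 1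
  have hgoal : (2 * Complex.I * (Real.sin θ : ℂ)) * u = 1 - u * u := by
    linear_combination u * hsin + hmul
  have hne : (1:ℂ) - u * u ≠ 0 := by rw [← hE]; exact hE1
  push_cast at hgoal
  have key : (2 * Complex.I * (Real.sin θ : ℂ)) * u = 1 - u * u := by
    rw [Complex.ofReal_sin]; exact hgoal
  calc _ = (2 * Complex.I * (Real.sin θ : ℂ)) * u * (1 - u * u)⁻¹ * ((d:ℂ) * (d:ℂ)⁻¹) := by ring
    _ = 1 := by rw [key, mul_inv_cancel₀ hne, mul_inv_cancel₀ hdC, one_mul]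

/-- For every r = 0,…,d−1 the vector
|r⟩_T = (2i/d) sin(π/m) ω^{−d/(2m)} Σ_q (−1)^{δ_{q0}} (ω^{−q/2}/(1−ω^{r−q−1/m})) |q⟩
is an eigenvector of T_{d,m} with eigenvalue ω^r. -/
theorem stmt14 (d m : ℕ) (hd : 2 ≤ d) (hm : 2 ≤ m) :
    ∀ r : Fin d,
      (Tmat d m).mulVec
        (fun q : Fin d =>
          (2 * Complex.I / d) * (Real.sin (Real.pi / m) : ℂ) * omg d (-((d : ℝ) / (2 * m))) *
            ((-1 : ℂ) ^ ((if (q : ℕ) = 0 then 1 else 0) : ℕ)) * omg d (-((q : ℝ) / 2)) /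
            (1 - omg d ((r : ℝ) - q - 1 / m))) =
      omg d (r : ℝ) •
        (fun q : Fin d =>
          (2 * Complex.I / d) * (Real.sin (Real.pi / m) : ℂ) * omg d (-((d : ℝ) / (2 * m))) *
            ((-1 : ℂ) ^ ((if (q : ℕ) = 0 then 1 else 0) : ℕ)) * omg d (-((q : ℝ) / 2)) /
            (1 - omg d ((r : ℝ) - q - 1 / m))) := by
  intro r
  funext i
  have hdC : (d:ℂ) ≠ 0 := Nat.cast_ne_zero.2 (by omega)
  have hmR : (m:ℝ) ≠ 0 := by positivity
  have hpow2 : ∀ n : ℕ, ((-1:ℂ)^n) * ((-1:ℂ)^n) = 1 := by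
    intro n; rw [← pow_add, ← two_mul, pow_mul]; norm_num
  simp only [Tmat, Matrix.mulVec, dotProduct, Matrix.of_apply, Pi.smul_apply,
    smul_eq_mul]
  have hsummand : ∀ j : Fin d,
      ((if i = j then omg d ((i:ℝ) + 1/m) else 0) -
        2 * Complex.I / d * (Real.sin (Real.pi/m) : ℂ) *
          (-1:ℂ)^(((if (i:ℕ)=0 then 1 else 0) + (if (j:ℕ)=0 then 1 else 0)) : ℕ) *
          omg d (((i:ℝ)+j)/2 - ((d:ℝ)-2)/(2*m))) *
      (2*Complex.I/d * (Real.sin (Real.pi/m):ℂ) * omg d (-((d:ℝ)/(2*m))) *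
        (-1:ℂ)^((if (j:ℕ)=0 then 1 else 0) : ℕ) * omg d (-((j:ℝ)/2)) /
        (1 - omg d ((r:ℝ) - j - 1/m)))
      = (if i = j then omg d ((i:ℝ)+1/m) *
          (2*Complex.I/d * (Real.sin (Real.pi/m):ℂ) * omg d (-((d:ℝ)/(2*m))) *
            (-1:ℂ)^((if (j:ℕ)=0 then 1 else 0) : ℕ) * omg d (-((j:ℝ)/2)) /
            (1 - omg d ((r:ℝ) - j - 1/m))) else 0)
        - (2*Complex.I/d * (Real.sin (Real.pi/m):ℂ) *
            (-1:ℂ)^((if (i:ℕ)=0 then 1 else 0) : ℕ) *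
            omg d ((i:ℝ)/2 - ((d:ℝ)-2)/(2*m))) *
          (2*Complex.I/d * (Real.sin (Real.pi/m):ℂ) * omg d (-((d:ℝ)/(2*m))) *
            (1 - omg d ((r:ℝ)-j-1/m))⁻¹) := by
    intro j
    have hD := denom_ne_zero hd hm r j
    rw [sub_mul, ite_mul, zero_mul]
    congr 1
    have hsplitω : omg d (((i:ℝ)+j)/2 - ((d:ℝ)-2)/(2*m))
        = omg d ((i:ℝ)/2 - ((d:ℝ)-2)/(2*m)) * omg d ((j:ℝ)/2) := by
      rw [← omg_add]; congr 1; ring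
    have hcancelω : omg d ((j:ℝ)/2) * omg d (-((j:ℝ)/2)) = 1 := by
      rw [← omg_add]
      have : (j:ℝ)/2 + -((j:ℝ)/2) = 0 := by ring
      rw [this, omg_zero]
    rw [pow_add, hsplitω, div_eq_mul_inv]
    set p : ℂ := (-1:ℂ)^((if (j:ℕ)=0 then 1 else 0) : ℕ) with hp
    set pi' : ℂ := (-1:ℂ)^((if (i:ℕ)=0 then 1 else 0) : ℕ)
    set C : ℂ := 2*Complex.I/d * (Real.sin (Real.pi/m):ℂ)
    set W : ℂ := omg d (-((d:ℝ)/(2*m)))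
    set A : ℂ := omg d ((i:ℝ)/2 - ((d:ℝ)-2)/(2*m))
    set B : ℂ := omg d ((j:ℝ)/2)
    set Bm : ℂ := omg d (-((j:ℝ)/2))
    set Dinv : ℂ := (1 - omg d ((r:ℝ)-j-1/m))⁻¹
    have hq := hpow2 ((if (j:ℕ)=0 then 1 else 0) : ℕ)
    linear_combination (C * pi' * A * C * W * Dinv * (p * p)) * hcancelω
      + (C * pi' * A * C * W * Dinv) * hq
  rw [Finset.sum_congr rfl (fun j _ => hsummand j), Finset.sum_sub_distrib,
    Finset.sum_ite_eq]
  simp only [Finset.mem_univ, if_true]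
  rw [← Finset.mul_sum, ← Finset.mul_sum, sumA hd hm r,
    show ((2:ℂ)*Complex.I/d * (Real.sin (Real.pi/m):ℂ) * omg d (-((d:ℝ)/(2*m))) *
      ((d:ℂ) * (1 - omg d (-((d:ℝ)/m)))⁻¹)) = 1 from keyB hd hm, mul_one]
  -- final scalar identity
  have hD := denom_ne_zero hd hm r i
  have hA : omg d (-((d:ℝ)/(2*m))) * omg d (-((i:ℝ)/2)) * omg d ((i:ℝ)+1/m)
      = omg d ((i:ℝ)/2 - ((d:ℝ)-2)/(2*m)) := by
    rw [← omg_add, ← omg_add]; congr 1; field_simp; ring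
  have h6 : omg d ((r:ℝ)) = omg d ((i:ℝ)+1/m) * omg d ((r:ℝ)-i-1/m) := by
    rw [← omg_add]; congr 1; ring
  have hinv : (1 - omg d ((r:ℝ)-i-1/m))⁻¹ * (1 - omg d ((r:ℝ)-i-1/m)) = 1 :=
    inv_mul_cancel₀ hD
  rw [h6]
  linear_combination
    (omg d ((i:ℝ)+1/m) * (2*Complex.I/d * (Real.sin (Real.pi/m):ℂ)) *
      omg d (-((d:ℝ)/(2*m))) * ((-1:ℂ)^((if (i:ℕ)=0 then 1 else 0) : ℕ)) *
      omg d (-((i:ℝ)/2))) * hinv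
    + ((2*Complex.I/d * (Real.sin (Real.pi/m):ℂ)) *
      ((-1:ℂ)^((if (i:ℕ)=0 then 1 else 0) : ℕ))) * hA
end

section
/- The d×d matrix W_1 := (1/√d) Σ_{i,j=0}^{d−1} (−1)^{δ_{j,0}} ω^{−3i/(2m) + ij + j/2} |i⟩⟨j| is unitary and satisfies W_1 Z_d W_1† = O_{1,2} and W_1 T_{d,m} W_1† = O_{1,3}. -/
open Matrix

/-- Z_d = diag(1, ω, …, ω^{d−1}). -/
noncomputable def Zmat (d : ℕ) : Matrix (Fin d) (Fin d) ℂ :=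
  Matrix.diagonal fun i => omg d (i : ℝ)

/-- γ_m(x) = (2x−1)/(2m). -/
noncomputable def gam (m x : ℕ) : ℝ := (2 * (x : ℝ) - 1) / (2 * m)

/-- O_{1,x} = Σ_{i=0}^{d−2} ω^{γ_m(x)} |i⟩⟨i+1| + ω^{(1−d)γ_m(x)} |d−1⟩⟨0|. -/
noncomputable def Oone (d m x : ℕ) : Matrix (Fin d) (Fin d) ℂ :=
  Matrix.of fun i j =>
    (if (j : ℕ) = (i : ℕ) + 1 then omg d (gam m x) else 0) +
      (if (i : ℕ) = d - 1 ∧ (j : ℕ) = 0 then omg d ((1 - (d : ℝ)) * gam m x) else 0)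

/-- W_1 = (1/√d) Σ_{i,j} (−1)^{δ_{j0}} ω^{−3i/(2m)+ij+j/2} |i⟩⟨j|. -/
noncomputable def Wone (d m : ℕ) : Matrix (Fin d) (Fin d) ℂ :=
  Matrix.of fun i j =>
    ((1 / Real.sqrt d : ℝ) : ℂ) * ((-1 : ℂ) ^ ((if (j : ℕ) = 0 then 1 else 0) : ℕ)) *
      omg d (-(3 * (i : ℝ)) / (2 * m) + (i : ℝ) * (j : ℝ) + (j : ℝ) / 2)

lemma star_omg (d : ℕ) (t : ℝ) : star (omg d t) = omg d (-t) := by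
  unfold omg
  rw [Complex.star_def, ← Complex.exp_conj]
  congr 1
  have h : (2*Real.pi*(-t)/d : ℝ) = -(2*Real.pi*t/d) := by ring
  rw [h, Complex.ofReal_neg, _root_.map_mul, Complex.conj_I, Complex.conj_ofReal]; ring

lemma omg_int (d : ℕ) (n : ℤ) :
    omg d (n : ℝ) = Complex.exp (2 * Real.pi * Complex.I / d) ^ n := by
  rw [← Complex.exp_int_mul]
  unfold omg; congr 1; push_cast; ring

lemma omg_int_eq_one_iff (d : ℕ) (hd : d ≠ 0) (n : ℤ) :
    omg d (n : ℝ) = 1 ↔ (d : ℤ) ∣ n := by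
  rw [omg_int]
  exact (Complex.isPrimitiveRoot_exp d hd).zpow_eq_one_iff_dvd n

lemma sum_omg (d : ℕ) (hd : d ≠ 0) (n : ℤ) :
    ∑ j : Fin d, omg d ((n : ℝ) * (j : ℝ)) = if (d:ℤ) ∣ n then (d:ℂ) else 0 := by
  have hpow : ∀ j : Fin d, omg d ((n:ℝ) * (j:ℝ)) = (omg d (n:ℝ)) ^ (j : ℕ) := by
    intro j
    have h1 : ((n:ℝ) * (j:ℝ)) = (((n * (j:ℕ)) : ℤ) : ℝ) := by push_cast; ring
    rw [h1, omg_int, omg_int, ← zpow_natCast, ← _root_.zpow_mul]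
  simp_rw [hpow]
  rw [Fin.sum_univ_eq_sum_range (fun t => omg d (n:ℝ) ^ t)]
  by_cases h : (d:ℤ) ∣ n
  · rw [if_pos h]
    have h1 : omg d (n:ℝ) = 1 := (omg_int_eq_one_iff d hd n).mpr h
    simp [h1]
  · rw [if_neg h]
    have h1 : omg d (n:ℝ) ≠ 1 := fun hh => h ((omg_int_eq_one_iff d hd n).mp hh)
    rw [geom_sum_eq h1 d]
    have hd1 : omg d (n:ℝ) ^ d = 1 := by
      have h2 : (omg d (n:ℝ))^d = omg d (((n * d :ℤ)):ℝ) := by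
        rw [omg_int, omg_int, ← zpow_natCast, ← _root_.zpow_mul]
      rw [h2, omg_int_eq_one_iff d hd]
      exact Dvd.intro_left n rfl
    rw [hd1]; simp

lemma int_dvd_window {d : ℕ} {n : ℤ} (h1 : -(d:ℤ) < n) (h2 : n ≤ d) (h : (d:ℤ) ∣ n) :
    n = 0 ∨ n = d := by
  obtain ⟨t, rfl⟩ := h
  rcases Nat.eq_zero_or_pos d with rfl | hd
  · simp at h1
  have hd' : (0:ℤ) < d := by exact_mod_cast hd
  rcases lt_trichotomy t 0 with ht | ht | ht
  · exfalso; nlinarith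
  · left; simp [ht]
  · have : t = 1 := by nlinarith
    right; simp [this]

lemma eps_sq (a : ℕ) : ((-1:ℂ)^a) * ((-1:ℂ)^a) = 1 := by
  rw [← pow_add]; exact Even.neg_one_pow ⟨a, rfl⟩

lemma inv_sqrt_sq (d : ℕ) :
    ((1/Real.sqrt d:ℝ):ℂ) * ((1/Real.sqrt d:ℝ):ℂ) = ((1/(d:ℝ)):ℂ) := by
  have h : (1/Real.sqrt d) * (1/Real.sqrt d) = 1/(d:ℝ) := by
    rw [div_mul_div_comm, one_mul, Real.mul_self_sqrt (by positivity)]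
  rw [← Complex.ofReal_mul, h]; push_cast; ring

lemma WWH (d m : ℕ) (hd : 2 ≤ d) : Wone d m * (Wone d m)ᴴ = 1 := by
  have hd0 : d ≠ 0 := by omega
  ext i k
  rw [Matrix.mul_apply]
  have key : ∀ j : Fin d,
      Wone d m i j * (Wone d m)ᴴ j k
        = ((1/(d:ℝ)):ℂ) * omg d (3*((k:ℝ)-(i:ℝ))/(2*m))
            * omg d (((((i:ℤ) - (k:ℤ)):ℤ):ℝ) * (j:ℝ)) := by
    intro j
    simp only [Wone, conjTranspose_apply, Matrix.of_apply, star_mul', star_pow, star_neg,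
      star_one, star_omg, Complex.star_def, Complex.conj_ofReal]
    calc ((1 / Real.sqrt d : ℝ) : ℂ) * ((-1 : ℂ) ^ ((if (j:ℕ) = 0 then 1 else 0):ℕ)) *
          omg d (-(3 * (i : ℝ)) / (2 * m) + (i : ℝ) * (j : ℝ) + (j : ℝ) / 2) *
          (((1 / Real.sqrt d : ℝ) : ℂ) * ((-1 : ℂ) ^ ((if (j:ℕ) = 0 then 1 else 0):ℕ)) *
          omg d (-(-(3 * (k : ℝ)) / (2 * m) + (k : ℝ) * (j : ℝ) + (j : ℝ) / 2)))
        = (((1 / Real.sqrt d : ℝ) : ℂ) * ((1 / Real.sqrt d : ℝ) : ℂ)) *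
          (((-1 : ℂ) ^ ((if (j:ℕ) = 0 then 1 else 0):ℕ)) * ((-1 : ℂ) ^ ((if (j:ℕ) = 0 then 1 else 0):ℕ))) *
          (omg d (-(3 * (i : ℝ)) / (2 * m) + (i : ℝ) * (j : ℝ) + (j : ℝ) / 2) *
           omg d (-(-(3 * (k : ℝ)) / (2 * m) + (k : ℝ) * (j : ℝ) + (j : ℝ) / 2))) := by ring
      _ = ((1/(d:ℝ)):ℂ) * omg d (3*((k:ℝ)-(i:ℝ))/(2*m)) * omg d (((((i:ℤ) - (k:ℤ)):ℤ):ℝ) * (j:ℝ)) := by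
          rw [inv_sqrt_sq, eps_sq, mul_one, ← omg_add, mul_assoc, ← omg_add]
          congr 1
          push_cast; ring
  rw [Finset.sum_congr rfl (fun j _ => key j), ← Finset.mul_sum, sum_omg d hd0]
  have hi := i.isLt; have hk := k.isLt
  by_cases h : i = k
  · subst h
    rw [if_pos (by simp)]
    simp only [sub_self, mul_zero, zero_div, omg_zero, mul_one, Matrix.one_apply_eq]
    rw [one_div]
    push_cast
    exact inv_mul_cancel₀ (by exact_mod_cast hd0)
  · rw [if_neg, mul_zero, Matrix.one_apply_ne h]
    intro hdvd
    rcases int_dvd_window (by omega) (by omega) hdvd with h0 | h0 <;>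
      [exact h (Fin.ext (by omega)); omega]

lemma one_div_d_mul (d : ℕ) (hd0 : d ≠ 0) (z : ℂ) : ((1/(d:ℝ)):ℂ) * z * (d:ℂ) = z := by
  have h : ((d:ℕ):ℂ) ≠ 0 := by exact_mod_cast hd0
  push_cast
  field_simp

lemma conj_diag (d m : ℕ) (hd : 2 ≤ d) (c₀ : ℝ) :
    Wone d m * Matrix.diagonal (fun j : Fin d => omg d (c₀ + (j:ℝ))) * (Wone d m)ᴴ
      = Matrix.of fun i k : Fin d =>
          if ((d:ℤ) ∣ ((i:ℤ) - (k:ℤ) + 1)) then omg d (c₀ + 3*((k:ℝ)-(i:ℝ))/(2*m)) else 0 := by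
  have hd0 : d ≠ 0 := by omega
  ext i k
  rw [Matrix.mul_apply, Matrix.of_apply]
  have key : ∀ j : Fin d,
      (Wone d m * Matrix.diagonal (fun j : Fin d => omg d (c₀ + (j:ℝ)))) i j * (Wone d m)ᴴ j k
        = ((1/(d:ℝ)):ℂ) * omg d (c₀ + 3*((k:ℝ)-(i:ℝ))/(2*m))
            * omg d (((((i:ℤ) - (k:ℤ) + 1):ℤ):ℝ) * (j:ℝ)) := by
    intro j
    rw [Matrix.mul_diagonal]
    simp only [Wone, conjTranspose_apply, Matrix.of_apply, star_mul', star_pow, star_neg,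
      star_one, star_omg, Complex.star_def, Complex.conj_ofReal]
    have hsplit : omg d (-(3 * (i : ℝ)) / (2 * m) + (i : ℝ) * (j : ℝ) + (j : ℝ) / 2) *
        omg d (c₀ + (j:ℝ)) *
        omg d (-(-(3 * (k : ℝ)) / (2 * m) + (k : ℝ) * (j : ℝ) + (j : ℝ) / 2))
        = omg d (c₀ + 3*((k:ℝ)-(i:ℝ))/(2*m)) * omg d (((((i:ℤ) - (k:ℤ) + 1):ℤ):ℝ) * (j:ℝ)) := by
      rw [← omg_add, ← omg_add, ← omg_add]
      congr 1
      push_cast; ring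
    calc ((1 / Real.sqrt d : ℝ) : ℂ) * ((-1 : ℂ) ^ ((if (j:ℕ) = 0 then 1 else 0):ℕ)) *
          omg d (-(3 * (i : ℝ)) / (2 * m) + (i : ℝ) * (j : ℝ) + (j : ℝ) / 2) *
          omg d (c₀ + (j:ℝ)) *
          (((1 / Real.sqrt d : ℝ) : ℂ) * ((-1 : ℂ) ^ ((if (j:ℕ) = 0 then 1 else 0):ℕ)) *
          omg d (-(-(3 * (k : ℝ)) / (2 * m) + (k : ℝ) * (j : ℝ) + (j : ℝ) / 2)))
        = (((1 / Real.sqrt d : ℝ) : ℂ) * ((1 / Real.sqrt d : ℝ) : ℂ)) *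
          (((-1 : ℂ) ^ ((if (j:ℕ) = 0 then 1 else 0):ℕ)) * ((-1 : ℂ) ^ ((if (j:ℕ) = 0 then 1 else 0):ℕ))) *
          (omg d (-(3 * (i : ℝ)) / (2 * m) + (i : ℝ) * (j : ℝ) + (j : ℝ) / 2) *
           omg d (c₀ + (j:ℝ)) *
           omg d (-(-(3 * (k : ℝ)) / (2 * m) + (k : ℝ) * (j : ℝ) + (j : ℝ) / 2))) := by ring
      _ = ((1/(d:ℝ)):ℂ) * omg d (c₀ + 3*((k:ℝ)-(i:ℝ))/(2*m))
            * omg d (((((i:ℤ) - (k:ℤ) + 1):ℤ):ℝ) * (j:ℝ)) := by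
          rw [inv_sqrt_sq, eps_sq, mul_one, hsplit, mul_assoc]
  rw [Finset.sum_congr rfl (fun j _ => key j), ← Finset.mul_sum, sum_omg d hd0]
  by_cases h : (d:ℤ) ∣ ((i:ℤ) - (k:ℤ) + 1)
  · rw [if_pos h, if_pos h, one_div_d_mul d hd0]
  · rw [if_neg h, if_neg h, mul_zero]

lemma WZWH (d m : ℕ) (hd : 2 ≤ d) (hm : 2 ≤ m) :
    Wone d m * Zmat d * (Wone d m)ᴴ = Oone d m 2 := by
  have h0 : Zmat d = Matrix.diagonal (fun j : Fin d => omg d ((0:ℝ) + (j:ℝ))) := by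
    simp [Zmat]
  rw [h0, conj_diag d m hd 0]
  ext i k
  rw [Matrix.of_apply]
  show _ = (if (k:ℕ) = (i:ℕ) + 1 then omg d (gam m 2) else 0) +
      (if (i:ℕ) = d - 1 ∧ (k:ℕ) = 0 then omg d ((1 - (d:ℝ)) * gam m 2) else 0)
  have hi := i.isLt; have hk := k.isLt
  by_cases h1 : (k:ℕ) = (i:ℕ) + 1
  · rw [if_pos (show (d:ℤ) ∣ ((i:ℤ) - (k:ℤ) + 1) from ⟨0, by omega⟩), if_pos h1,
      if_neg (by omega : ¬((i:ℕ) = d - 1 ∧ (k:ℕ) = 0)), add_zero]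
    congr 1
    have hk1 : ((k:ℕ):ℝ) = ((i:ℕ):ℝ) + 1 := by exact_mod_cast h1
    unfold gam
    rw [hk1]; push_cast; ring
  · by_cases h2 : (i:ℕ) = d - 1 ∧ (k:ℕ) = 0
    · rw [if_pos (show (d:ℤ) ∣ ((i:ℤ) - (k:ℤ) + 1) from ⟨1, by omega⟩), if_neg h1, if_pos h2, zero_add]
      congr 1
      have hi' : ((i:ℕ):ℝ) = (d:ℝ) - 1 := by
        rw [h2.1, Nat.cast_sub (by omega : 1 ≤ d), Nat.cast_one]
      have hk' : ((k:ℕ):ℝ) = 0 := by rw [h2.2, Nat.cast_zero]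
      unfold gam
      rw [hi', hk']; push_cast; ring
    · rw [if_neg, if_neg h1, if_neg h2, add_zero]
      intro hdvd
      rcases int_dvd_window (by omega) (by omega) hdvd with h0 | h0 <;> omega

noncomputable def uu (d : ℕ) : Fin d → ℂ :=
  fun j => ((-1:ℂ) ^ ((if (j:ℕ) = 0 then 1 else 0):ℕ)) * omg d ((j:ℝ)/2)

noncomputable def cc (d m : ℕ) : ℂ :=
  2 * Complex.I / d * (Real.sin (Real.pi/m) : ℂ) * omg d (-((d:ℝ)-2)/(2*m))

lemma Tmat_eq (d m : ℕ) :
    Tmat d m = Matrix.diagonal (fun j : Fin d => omg d ((1/(m:ℝ)) + (j:ℝ)))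
      - cc d m • Matrix.vecMulVec (uu d) (uu d) := by
  ext j l
  simp only [Tmat, Matrix.of_apply, Matrix.sub_apply, Matrix.diagonal_apply,
    Matrix.smul_apply, Matrix.vecMulVec_apply, smul_eq_mul, uu, cc]
  congr 1
  · split
    · congr 1; ring
    · rfl
  · have hsplit : omg d (((j:ℝ) + (l:ℝ))/2 - ((d:ℝ)-2)/(2*m))
        = omg d (-((d:ℝ)-2)/(2*m)) * (omg d ((j:ℝ)/2) * omg d ((l:ℝ)/2)) := by
      rw [← omg_add, ← omg_add]; congr 1; ring
    rw [hsplit, pow_add]; ring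

lemma aWu (d m : ℕ) (hd : 2 ≤ d) (i : Fin d) :
    ∑ j, Wone d m i j * uu d j
      = if (i:ℕ) = d - 1 then (Real.sqrt d : ℂ) * omg d (-(3*((d:ℝ)-1))/(2*m)) else 0 := by
  have hd0 : d ≠ 0 := by omega
  have key : ∀ j : Fin d, Wone d m i j * uu d j
      = ((1/Real.sqrt d:ℝ):ℂ) * omg d (-(3*((i:ℕ):ℝ))/(2*m)) * omg d (((((i:ℤ)+1):ℤ):ℝ) * (j:ℝ)) := by
    intro j
    simp only [Wone, Matrix.of_apply, uu]
    have hsplit : omg d (-(3 * (i : ℝ)) / (2 * m) + (i : ℝ) * (j : ℝ) + (j : ℝ) / 2) *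
        omg d ((j:ℝ)/2)
        = omg d (-(3*((i:ℕ):ℝ))/(2*m)) * omg d (((((i:ℤ)+1):ℤ):ℝ) * (j:ℝ)) := by
      rw [← omg_add, ← omg_add]; congr 1; push_cast; ring
    calc ((1 / Real.sqrt d : ℝ) : ℂ) * ((-1 : ℂ) ^ ((if (j:ℕ) = 0 then 1 else 0):ℕ)) *
          omg d (-(3 * (i : ℝ)) / (2 * m) + (i : ℝ) * (j : ℝ) + (j : ℝ) / 2) *
          (((-1:ℂ) ^ ((if (j:ℕ) = 0 then 1 else 0):ℕ)) * omg d ((j:ℝ)/2))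
        = ((1 / Real.sqrt d : ℝ) : ℂ) *
          (((-1 : ℂ) ^ ((if (j:ℕ) = 0 then 1 else 0):ℕ)) * ((-1 : ℂ) ^ ((if (j:ℕ) = 0 then 1 else 0):ℕ))) *
          (omg d (-(3 * (i : ℝ)) / (2 * m) + (i : ℝ) * (j : ℝ) + (j : ℝ) / 2) * omg d ((j:ℝ)/2)) := by
          ring
      _ = ((1/Real.sqrt d:ℝ):ℂ) * omg d (-(3*((i:ℕ):ℝ))/(2*m)) * omg d (((((i:ℤ)+1):ℤ):ℝ) * (j:ℝ)) := by
          rw [eps_sq, mul_one, hsplit, mul_assoc]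
  rw [Finset.sum_congr rfl (fun j _ => key j), ← Finset.mul_sum, sum_omg d hd0]
  have hi := i.isLt
  by_cases h : (i:ℕ) = d - 1
  · rw [if_pos (show (d:ℤ) ∣ ((i:ℤ)+1) from ⟨1, by omega⟩), if_pos h]
    have hsd : ((1/Real.sqrt d:ℝ):ℂ) * ((d:ℕ):ℂ) = ((Real.sqrt d : ℝ):ℂ) := by
      rw [show ((d:ℕ):ℂ) = ((d:ℝ):ℂ) by push_cast; ring, ← Complex.ofReal_mul]
      congr 1
      rw [one_div, inv_mul_eq_div, Real.div_sqrt]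
    have hi' : ((i:ℕ):ℝ) = (d:ℝ) - 1 := by
      rw [h, Nat.cast_sub (by omega : 1 ≤ d), Nat.cast_one]
    rw [mul_assoc, mul_comm (omg d _) ((d:ℕ):ℂ), ← mul_assoc, hsd, hi']
  · rw [if_neg (fun hdvd => by rcases int_dvd_window (by omega) (by omega) hdvd with h0 | h0 <;> omega), mul_zero, if_neg h]

lemma bWu (d m : ℕ) (hd : 2 ≤ d) (k : Fin d) :
    ∑ l, uu d l * star (Wone d m k l)
      = if (k:ℕ) = 0 then (Real.sqrt d : ℂ) else 0 := by
  have hd0 : d ≠ 0 := by omega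
  have key : ∀ l : Fin d, uu d l * star (Wone d m k l)
      = ((1/Real.sqrt d:ℝ):ℂ) * omg d (3*((k:ℕ):ℝ)/(2*m)) * omg d ((((-(k:ℤ)):ℤ):ℝ) * (l:ℝ)) := by
    intro l
    simp only [Wone, Matrix.of_apply, uu, star_mul', star_pow, star_neg, star_one,
      star_omg, Complex.star_def, Complex.conj_ofReal]
    have hsplit : omg d ((l:ℝ)/2) *
        omg d (-(-(3 * (k : ℝ)) / (2 * m) + (k : ℝ) * (l : ℝ) + (l : ℝ) / 2))
        = omg d (3*((k:ℕ):ℝ)/(2*m)) * omg d ((((-(k:ℤ)):ℤ):ℝ) * (l:ℝ)) := by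
      rw [← omg_add, ← omg_add]; congr 1; push_cast; ring
    calc ((-1:ℂ) ^ ((if (l:ℕ) = 0 then 1 else 0):ℕ)) * omg d ((l:ℝ)/2) *
          (((1 / Real.sqrt d : ℝ) : ℂ) * ((-1 : ℂ) ^ ((if (l:ℕ) = 0 then 1 else 0):ℕ)) *
          omg d (-(-(3 * (k : ℝ)) / (2 * m) + (k : ℝ) * (l : ℝ) + (l : ℝ) / 2)))
        = ((1 / Real.sqrt d : ℝ) : ℂ) *
          (((-1 : ℂ) ^ ((if (l:ℕ) = 0 then 1 else 0):ℕ)) * ((-1 : ℂ) ^ ((if (l:ℕ) = 0 then 1 else 0):ℕ))) *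
          (omg d ((l:ℝ)/2) *
           omg d (-(-(3 * (k : ℝ)) / (2 * m) + (k : ℝ) * (l : ℝ) + (l : ℝ) / 2))) := by ring
      _ = ((1/Real.sqrt d:ℝ):ℂ) * omg d (3*((k:ℕ):ℝ)/(2*m)) * omg d ((((-(k:ℤ)):ℤ):ℝ) * (l:ℝ)) := by
          rw [eps_sq, mul_one, hsplit, mul_assoc]
  rw [Finset.sum_congr rfl (fun l _ => key l), ← Finset.mul_sum, sum_omg d hd0]
  have hk := k.isLt
  by_cases h : (k:ℕ) = 0
  · rw [if_pos (show (d:ℤ) ∣ (-(k:ℤ)) from ⟨0, by omega⟩), if_pos h]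
    have hk' : ((k:ℕ):ℝ) = 0 := by rw [h, Nat.cast_zero]
    rw [hk']
    have h0 : (3*(0:ℝ)/(2*m)) = 0 := by ring
    rw [h0, omg_zero, mul_one]
    rw [show ((d:ℕ):ℂ) = ((d:ℝ):ℂ) by push_cast; ring, ← Complex.ofReal_mul]
    congr 1
    rw [one_div, inv_mul_eq_div, Real.div_sqrt]
  · rw [if_neg (fun hdvd => by rcases int_dvd_window (by omega) (by omega) hdvd with h0 | h0 <;> omega), mul_zero, if_neg h]

lemma rank1 (d m : ℕ) :
    Wone d m * Matrix.vecMulVec (uu d) (uu d) * (Wone d m)ᴴ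
      = Matrix.vecMulVec (fun i => ∑ j, Wone d m i j * uu d j)
          (fun k => ∑ l, uu d l * star (Wone d m k l)) := by
  ext i k
  simp only [Matrix.mul_apply, Matrix.vecMulVec_apply, Matrix.conjTranspose_apply,
    Finset.sum_mul, Finset.mul_sum]
  exact Finset.sum_congr rfl fun j _ => Finset.sum_congr rfl fun l _ => by ring

lemma key_trig (d m : ℕ) (hd0 : d ≠ 0) (hm0 : m ≠ 0) :
    omg d ((d:ℝ)/(2*m)) - omg d (-((d:ℝ)/(2*m))) = 2 * Complex.I * (Real.sin (Real.pi/m) : ℂ) := by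
  unfold omg
  have h : (2*Real.pi*((d:ℝ)/(2*m))/d : ℝ) = Real.pi/m := by
    have hd' : (d:ℝ) ≠ 0 := by exact_mod_cast hd0
    have hm' : (m:ℝ) ≠ 0 := by exact_mod_cast hm0
    field_simp
  have h2 : (2*Real.pi*(-((d:ℝ)/(2*m)))/d : ℝ) = -(Real.pi/m) := by rw [← h]; ring
  rw [h, h2, Complex.ofReal_neg, neg_mul, Complex.exp_mul_I, ← neg_mul, Complex.exp_mul_I,
    Complex.cos_neg, Complex.sin_neg, ← Complex.ofReal_sin]
  ring

lemma WTWH (d m : ℕ) (hd : 2 ≤ d) (hm : 2 ≤ m) :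
    Wone d m * Tmat d m * (Wone d m)ᴴ = Oone d m 3 := by
  have hd0 : d ≠ 0 := by omega
  have hm0 : m ≠ 0 := by omega
  rw [Tmat_eq, Matrix.mul_sub, Matrix.sub_mul, Matrix.mul_smul, Matrix.smul_mul,
    conj_diag d m hd (1/(m:ℝ)), rank1]
  ext i k
  simp only [Matrix.sub_apply, Matrix.of_apply, Matrix.smul_apply, Matrix.vecMulVec_apply,
    smul_eq_mul, aWu d m hd i, bWu d m hd k]
  show _ = (if (k:ℕ) = (i:ℕ) + 1 then omg d (gam m 3) else 0) +
      (if (i:ℕ) = d - 1 ∧ (k:ℕ) = 0 then omg d ((1 - (d:ℝ)) * gam m 3) else 0)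
  have hi := i.isLt; have hk := k.isLt
  by_cases h1 : (k:ℕ) = (i:ℕ) + 1
  · rw [if_pos (show (d:ℤ) ∣ ((i:ℤ) - (k:ℤ) + 1) from ⟨0, by omega⟩),
      if_neg (show ¬(k:ℕ) = 0 by omega), mul_zero, mul_zero, sub_zero,
      if_pos h1, if_neg (show ¬((i:ℕ) = d - 1 ∧ (k:ℕ) = 0) by omega), add_zero]
    congr 1
    have hk1 : ((k:ℕ):ℝ) = ((i:ℕ):ℝ) + 1 := by exact_mod_cast h1
    unfold gam
    rw [hk1]; push_cast; ring
  · by_cases h2 : (i:ℕ) = d - 1 ∧ (k:ℕ) = 0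
    · rw [if_pos (show (d:ℤ) ∣ ((i:ℤ) - (k:ℤ) + 1) from ⟨1, by omega⟩),
        if_pos h2.1, if_pos h2.2, if_neg h1, if_pos h2, zero_add]
      have hi' : ((i:ℕ):ℝ) = (d:ℝ) - 1 := by
        rw [h2.1, Nat.cast_sub (by omega : 1 ≤ d), Nat.cast_one]
      have hk' : ((k:ℕ):ℝ) = 0 := by rw [h2.2, Nat.cast_zero]
      rw [hi', hk']
      have e1 : omg d (1/(m:ℝ) + 3*((0:ℝ) - ((d:ℝ)-1))/(2*m))
          = omg d ((5-4*(d:ℝ))/(2*m)) * omg d ((d:ℝ)/(2*m)) := by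
        rw [← omg_add]; congr 1; ring
      have e2 : omg d ((1 - (d:ℝ)) * gam m 3)
          = omg d ((5-4*(d:ℝ))/(2*m)) * omg d (-((d:ℝ)/(2*m))) := by
        rw [← omg_add]; unfold gam; congr 1; push_cast; ring
      have hs : ((Real.sqrt d:ℝ):ℂ) * ((Real.sqrt d:ℝ):ℂ) = ((d:ℕ):ℂ) := by
        rw [← Complex.ofReal_mul, Real.mul_self_sqrt (by positivity)]; push_cast; ring
      have hsplit : omg d (-((d:ℝ)-2)/(2*m)) * omg d (-(3*((d:ℝ)-1))/(2*m))
          = omg d ((5-4*(d:ℝ))/(2*m)) := by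
        rw [← omg_add]; congr 1; ring
      have hdC : ((d:ℕ):ℂ) ≠ 0 := by exact_mod_cast hd0
      have e3 : cc d m * (((Real.sqrt d:ℝ):ℂ) * omg d (-(3*((d:ℝ)-1))/(2*m)) * ((Real.sqrt d:ℝ):ℂ))
          = 2 * Complex.I * (Real.sin (Real.pi/m):ℂ) * omg d ((5-4*(d:ℝ))/(2*m)) := by
        unfold cc
        calc 2 * Complex.I / (d:ℕ) * (Real.sin (Real.pi/m) : ℂ) * omg d (-((d:ℝ)-2)/(2*m)) *
              (((Real.sqrt d:ℝ):ℂ) * omg d (-(3*((d:ℝ)-1))/(2*m)) * ((Real.sqrt d:ℝ):ℂ))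
            = 2 * Complex.I * (Real.sin (Real.pi/m) : ℂ) *
              (omg d (-((d:ℝ)-2)/(2*m)) * omg d (-(3*((d:ℝ)-1))/(2*m))) *
              ((((Real.sqrt d:ℝ):ℂ) * ((Real.sqrt d:ℝ):ℂ)) / ((d:ℕ):ℂ)) := by ring
          _ = 2 * Complex.I * (Real.sin (Real.pi/m):ℂ) * omg d ((5-4*(d:ℝ))/(2*m)) := by
              rw [hs, hsplit, div_self hdC, mul_one]
      rw [e1, e2]
      linear_combination (omg d ((5-4*(d:ℝ))/(2*m))) * key_trig d m hd0 hm0 - e3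
    · rw [if_neg (fun hdvd => by
          rcases int_dvd_window (by omega) (by omega) hdvd with h0 | h0 <;> omega),
        if_neg h1, if_neg h2, add_zero]
      rcases not_and_or.mp h2 with h3 | h3
      · rw [if_neg h3, zero_mul, mul_zero, sub_zero]
      · rw [if_neg h3, mul_zero, mul_zero, sub_zero]

/-- W_1 is unitary with W_1 Z_d W_1† = O_{1,2} and W_1 T_{d,m} W_1† = O_{1,3}. -/
theorem stmt15 (d m : ℕ) (hd : 2 ≤ d) (hm : 2 ≤ m) :
    Wone d m ∈ Matrix.unitaryGroup (Fin d) ℂ ∧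
    Wone d m * Zmat d * (Wone d m)ᴴ = Oone d m 2 ∧
    Wone d m * Tmat d m * (Wone d m)ᴴ = Oone d m 3 := by
  refine ⟨?_, WZWH d m hd hm, WTWH d m hd hm⟩
  rw [Matrix.mem_unitaryGroup_iff]
  rw [Matrix.star_eq_conjTranspose]
  exact WWH d m hd
end

section
/- Let d ≥ 2, m ≥ 2 and N ≥ 2 be integers, c := exp(2πi/m), and let V be a complex vector space. Suppose ψ : (ℤ/dℤ)^N → V satisfies, for every i = (i_1,…,i_N) ∈ (ℤ/dℤ)^N, both c^{[i_2 = 0] − [i_1 = 0]} ψ(i) = ψ(i − 1) and c^{2([i_2 = 0] − [i_1 = 0])} ψ(i) = ψ(i − 1), where [P] is 1 if P holds and 0 otherwise, and i − 1 denotes subtracting 1 (mod d) from every coordinate of i. Then ψ(i) = 0 for every i with i_1 ≠ i_2, and ψ(i − 1) = ψ(i) for every i with i_1 = i_2. -/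
/-- Let c = exp(2πi/m) and ψ : (ℤ/dℤ)^N → V satisfy
c^{[i₂=0]−[i₁=0]} ψ(i) = ψ(i−1) and c^{2([i₂=0]−[i₁=0])} ψ(i) = ψ(i−1) for all i.
Then ψ(i) = 0 whenever i₁ ≠ i₂, and ψ(i−1) = ψ(i) whenever i₁ = i₂. -/
theorem stmt19 (d m N : ℕ) (hd : 2 ≤ d) (hm : 2 ≤ m) (hN : 2 ≤ N)
    (V : Type*) [AddCommGroup V] [Module ℂ V]
    (ψ : (Fin N → ZMod d) → V)
    (c : ℂ) (hc : c = Complex.exp (2 * Real.pi * Complex.I / m))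
    (h1 : ∀ i : Fin N → ZMod d,
      c ^ (((if i ⟨1, by omega⟩ = 0 then 1 else 0) -
            (if i ⟨0, by omega⟩ = 0 then 1 else 0) : ℤ)) • ψ i =
        ψ (fun t => i t - 1))
    (h2 : ∀ i : Fin N → ZMod d,
      c ^ ((2 * ((if i ⟨1, by omega⟩ = 0 then 1 else 0) -
            (if i ⟨0, by omega⟩ = 0 then 1 else 0)) : ℤ)) • ψ i =
        ψ (fun t => i t - 1)) :
    (∀ i : Fin N → ZMod d, i ⟨0, by omega⟩ ≠ i ⟨1, by omega⟩ → ψ i = 0) ∧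
    (∀ i : Fin N → ZMod d, i ⟨0, by omega⟩ = i ⟨1, by omega⟩ →
      ψ (fun t => i t - 1) = ψ i) := by
  haveI : NeZero d := ⟨by omega⟩
  have hc0 : c ≠ 0 := by rw [hc]; exact Complex.exp_ne_zero _
  have hc1 : c ≠ 1 := by
    rw [hc, ne_eq, Complex.exp_eq_one_iff]
    rintro ⟨n, hn⟩
    have hm0 : (m : ℂ) ≠ 0 := Nat.cast_ne_zero.mpr (by omega)
    have hπ : (Real.pi : ℂ) ≠ 0 := by exact_mod_cast Real.pi_ne_zero
    have key : (n : ℂ) * m = 1 := by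
      field_simp at hn
      have hA : (2 * (Real.pi : ℂ) * Complex.I) ≠ 0 :=
        mul_ne_zero (mul_ne_zero two_ne_zero hπ) Complex.I_ne_zero
      have h0 : (2 * (Real.pi : ℂ) * Complex.I) * ((n : ℂ) * m - 1) = 0 := by
        linear_combination (-(2 * (Real.pi : ℂ) * Complex.I)) * hn
      have := (mul_eq_zero.mp h0).resolve_left hA
      linear_combination this
    have key2 : n * (m : ℤ) = 1 := by exact_mod_cast key
    have : (m : ℤ) ≤ 1 := Int.le_of_dvd one_pos ⟨n, by linarith⟩
    omega
  -- ψ vanishes when the exponent is nonzero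
  have hzero : ∀ i : Fin N → ZMod d,
      (((if i ⟨1, by omega⟩ = 0 then 1 else 0) -
        (if i ⟨0, by omega⟩ = 0 then 1 else 0) : ℤ)) ≠ 0 → ψ i = 0 := by
    intro i he
    have h := (h1 i).trans (h2 i).symm
    split_ifs at he h with hA hB hB
    · simp at he
    · -- exponent = 1
      simp only [sub_zero, mul_one] at h
      have hfac : c ^ (1 : ℤ) - c ^ (2 : ℤ) ≠ 0 := by
        have : c ^ (1 : ℤ) - c ^ (2 : ℤ) = c * (1 - c) := by
          rw [zpow_one, zpow_two]
          ring
        rw [this]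
        exact mul_ne_zero hc0 (sub_ne_zero.mpr (Ne.symm hc1))
      have : (c ^ (1 : ℤ) - c ^ (2 : ℤ)) • ψ i = 0 := by
        rw [sub_smul, h]
        · simp
      exact (smul_eq_zero.mp this).resolve_left hfac
    · -- exponent = -1
      simp only [zero_sub] at h
      have hfac : c ^ (-1 : ℤ) - c ^ (2 * (-1) : ℤ) ≠ 0 := by
        have : c ^ (-1 : ℤ) - c ^ (2 * (-1) : ℤ) = c⁻¹ * (1 - c⁻¹) := by
          rw [show (2 * (-1) : ℤ) = -2 by ring, zpow_neg, zpow_neg, zpow_one, zpow_two,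
            mul_inv]
          ring
        rw [this]
        refine mul_ne_zero (inv_ne_zero hc0) (sub_ne_zero.mpr ?_)
        intro h'
        exact hc1 (by rw [← inv_eq_one, ← h'])
      have : (c ^ (-1 : ℤ) - c ^ (2 * (-1) : ℤ)) • ψ i = 0 := by
        rw [sub_smul, h]
        simp
      exact (smul_eq_zero.mp this).resolve_left hfac
    · simp at he
  -- step back: if ψ(i − 1) = 0 then ψ(i) = 0
  have hstep : ∀ i : Fin N → ZMod d, ψ (fun t => i t - 1) = 0 → ψ i = 0 := by
    intro i h0
    have h := h1 i
    rw [h0] at h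
    have hcne : (c ^ (((if i ⟨1, by omega⟩ = 0 then 1 else 0) -
        (if i ⟨0, by omega⟩ = 0 then 1 else 0) : ℤ))) ≠ 0 := zpow_ne_zero _ hc0
    exact (smul_eq_zero.mp h).resolve_left hcne
  constructor
  · intro i hi
    have key : ∀ k : ℕ, ψ (fun t => i t - (k : ZMod d)) = 0 → ψ i = 0 := by
      intro k
      induction k with
      | zero => simp
      | succ n ih =>
        intro h0
        apply ih
        apply hstep
        have : (fun t => (fun t => i t - (n : ZMod d)) t - 1) =
            (fun t => i t - ((n + 1 : ℕ) : ZMod d)) := by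
          funext t
          push_cast
          ring
        rw [this]
        exact h0
    apply key (i ⟨0, by omega⟩).val
    apply hzero
    have e0 : i ⟨0, by omega⟩ - (((i ⟨0, by omega⟩).val : ℕ) : ZMod d) = 0 := by
      simp [ZMod.natCast_val, ZMod.cast_id]
    have e1 : i ⟨1, by omega⟩ - (((i ⟨0, by omega⟩).val : ℕ) : ZMod d) ≠ 0 := by
      simp only [ZMod.natCast_val, ZMod.cast_id]
      exact sub_ne_zero.mpr (Ne.symm hi)
    simp only [e0, e1, if_true, if_neg e1]
    norm_num
  · intro i hi
    have h := h1 i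
    rw [hi] at h
    exact (by simpa using h : ψ i = ψ fun t => i t - 1).symm
end
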